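/- For every (a_1, ..., a_{2N}) ∈ ℕ^{2N} \ {0}, the sum ∑_{r=1}^{N+1} Φ_{N,r}(a_1,...,a_{2N}) = 0, where Φ_{N,r}(a_1,...,a_{2N}) = q^{Y_r} (q^{-(a_{2r-2}+1)} - q^{-a_{2r-1}}) · F_q(a_1 - 1, a_2 + 1, ..., a_{2r-2} + 1, a_{2r-1}, ..., a_{2N}), with Y_r = r - 1 + ∑_{j=1}^{2r-2} (-1)^j a_j, and with the convention a_0 = a_{2N+1} = 0. -/
import Mathlib


noncomputable section

/-- The `q`-integer `[m]` in `ℂ(q)`. -/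
def qintF (m : ℕ) : RatFunc ℂ :=
  algebraMap (Polynomial ℂ) (RatFunc ℂ) (∑ k ∈ Finset.range m, Polynomial.X ^ k)

/-- The `q`-factorial `[n]!`. -/
def qfactF (n : ℕ) : RatFunc ℂ := ∏ k ∈ Finset.range n, qintF (k + 1)

/-- The Gaussian binomial coefficient for integer arguments:
`qbinom(n, p) = 1` if `p = 0`, `0` if `p < 0` or `p > max(0, n)`, and
`[n]!/([p]![n-p]!)` if `0 ≤ p ≤ n`. -/
def qbinomZ (n p : ℤ) : RatFunc ℂ :=
  if p = 0 then 1
  else if p < 0 ∨ p > max 0 n then 0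
  else qfactF n.toNat / (qfactF p.toNat * qfactF (n - p).toNat)

/-- The tuple `(a_1, …, a_{2N})` extended by the convention `a_0 = a_{2N+1} = 0`
(indices `1 ≤ j ≤ 2N` give the actual entries). -/
def bExt (N : ℕ) (a : Fin (2 * N) → ℕ) (j : ℕ) : ℤ :=
  if h : 1 ≤ j ∧ j ≤ 2 * N then (a ⟨j - 1, by omega⟩ : ℤ) else 0

/-- The modified tuple appearing in `Φ_{N,r}`:
`(a_1 - 1, a_2 + 1, a_3 - 1, …, a_{2r-3} - 1, a_{2r-2} + 1, a_{2r-1}, …, a_{2N})`,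
i.e. entries with odd index `j ≤ 2r-3` are decreased by `1`, entries with even index
`j ≤ 2r-2` are increased by `1`, and the rest are unchanged. -/
def cMod (N : ℕ) (a : Fin (2 * N) → ℕ) (r j : ℕ) : ℤ :=
  if j % 2 = 1 ∧ j + 3 ≤ 2 * r then bExt N a j - 1
  else if j % 2 = 0 ∧ j + 2 ≤ 2 * r then bExt N a j + 1
  else bExt N a j

/-- The exponent `Y_r = r - 1 + ∑_{j=1}^{2r-2} (-1)^j a_j`. -/
def Yexp (N : ℕ) (a : Fin (2 * N) → ℕ) (r : ℕ) : ℤ :=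
  (r : ℤ) - 1 + ∑ j ∈ Finset.Icc 1 (2 * r - 2), (-1 : ℤ) ^ j * bExt N a j

/-- `Φ_{N,r}(a_1,…,a_{2N}) = q^{Y_r} (q^{-(a_{2r-2}+1)} - q^{-a_{2r-1}}) ·
F_q(a_1 - 1, a_2 + 1, …, a_{2r-2} + 1, a_{2r-1}, …, a_{2N})`, with the convention
`a_0 = a_{2N+1} = 0`. -/
def Phi (N : ℕ) (a : Fin (2 * N) → ℕ) (r : ℕ) : RatFunc ℂ :=
  (RatFunc.X : RatFunc ℂ) ^ (Yexp N a r) *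
    ((RatFunc.X : RatFunc ℂ) ^ (-(bExt N a (2 * r - 2) + 1)) -
      (RatFunc.X : RatFunc ℂ) ^ (-(bExt N a (2 * r - 1)))) *
    ∏ i ∈ Finset.range (2 * N - 1),
      qbinomZ (cMod N a r (i + 1) + cMod N a r (i + 2) - 1) (cMod N a r (i + 2))

end

noncomputable section TelescopeAux

open Finset

lemma Xr_ne_zero : (RatFunc.X : RatFunc ℂ) ≠ 0 := RatFunc.X_ne_zero

lemma qintF_eq (m : ℕ) : qintF m = ∑ k ∈ range m, (RatFunc.X : RatFunc ℂ) ^ k := by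
  unfold qintF
  rw [map_sum]
  exact Finset.sum_congr rfl fun k _ => by rw [map_pow, RatFunc.algebraMap_X]

lemma qintF_ne_zero (m : ℕ) (hm : 0 < m) : qintF m ≠ 0 := by
  unfold qintF
  apply RatFunc.algebraMap_ne_zero
  intro h
  have h0 : (∑ k ∈ range m, (Polynomial.X : Polynomial ℂ) ^ k).coeff 0 = 1 := by
    rw [Polynomial.finset_sum_coeff]
    rw [Finset.sum_eq_single 0]
    · simp
    · intro b _ hb
      simp [Polynomial.coeff_X_pow, Ne.symm hb]
    · intro h; simp at h; omega
  rw [h] at h0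
  simp at h0

lemma qfactF_ne_zero (n : ℕ) : qfactF n ≠ 0 :=
  Finset.prod_ne_zero_iff.mpr fun k _ => qintF_ne_zero (k+1) (by omega)

lemma qfact_succ (n : ℕ) : qfactF (n + 1) = qfactF n * qintF (n + 1) :=
  Finset.prod_range_succ _ n

lemma qintF_add (p m : ℕ) : qintF (p + m) = qintF p + (RatFunc.X : RatFunc ℂ) ^ p * qintF m := by
  rw [qintF_eq, qintF_eq, qintF_eq, Finset.sum_range_add, Finset.mul_sum]
  congr 1
  exact Finset.sum_congr rfl fun k _ => (pow_add _ p k)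

lemma qintF_geom (m : ℕ) : qintF m * ((RatFunc.X : RatFunc ℂ) - 1) = (RatFunc.X : RatFunc ℂ) ^ m - 1 := by
  rw [qintF_eq]; exact geom_sum_mul _ m

lemma qbinomZ_zero (n : ℤ) : qbinomZ n 0 = 1 := if_pos rfl

lemma qbinomZ_of_neg {n p : ℤ} (h : p < 0) : qbinomZ n p = 0 := by
  unfold qbinomZ
  rw [if_neg (by omega), if_pos (Or.inl h)]

lemma qbinomZ_of_gt {n p : ℤ} (h : max 0 n < p) : qbinomZ n p = 0 := by
  unfold qbinomZ
  have h0 : (0:ℤ) < p := lt_of_le_of_lt (le_max_left 0 n) h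
  rw [if_neg (by omega), if_pos (Or.inr h)]

lemma qbinomZ_cast (n p m : ℕ) (h : n = p + m) :
    qbinomZ (n : ℤ) (p : ℤ) = qfactF n / (qfactF p * qfactF m) := by
  unfold qbinomZ
  rcases Nat.eq_zero_or_pos p with hp | hp
  · subst hp
    rw [if_pos (by norm_num)]
    subst h
    rw [show qfactF 0 = 1 from Finset.prod_range_zero _, one_mul, zero_add,
      div_self (qfactF_ne_zero _)]
  · rw [if_neg (by omega), if_neg (by subst h; push_cast; omega)]
    have e1 : ((n:ℤ)).toNat = n := by omega
    have e2 : ((p:ℤ)).toNat = p := by omega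
    have e3 : ((n:ℤ) - (p:ℤ)).toNat = m := by omega
    rw [e1, e2, e3]

lemma qbinomZ_self (n : ℕ) : qbinomZ (n : ℤ) (n : ℤ) = 1 := by
  rw [qbinomZ_cast n n 0 (by omega)]
  rw [show qfactF 0 = 1 from Finset.prod_range_zero _]
  rw [mul_one, div_self (qfactF_ne_zero _)]


lemma pascal1 (a b : ℕ) :
    qfactF (a+b+2) / (qfactF (b+1) * qfactF (a+1))
      = (RatFunc.X : RatFunc ℂ)^(a+1) * (qfactF (a+b+1) / (qfactF b * qfactF (a+1)))
        + qfactF (a+b+1) / (qfactF (b+1) * qfactF a) := by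
  have k1 : qfactF (a+b+2) = qfactF (a+b+1) * qintF (a+b+2) := qfact_succ (a+b+1)
  have k4 : qintF (a+b+2) = qintF (a+1) + (RatFunc.X : RatFunc ℂ)^(a+1) * qintF (b+1) := by
    rw [show a+b+2 = (a+1)+(b+1) by ring]; exact qintF_add _ _
  have k2 : qfactF (b+1) = qfactF b * qintF (b+1) := qfact_succ b
  have k3 : qfactF (a+1) = qfactF a * qintF (a+1) := qfact_succ a
  rw [k1, k4, k2, k3]
  have n1 := qfactF_ne_zero a
  have n2 := qfactF_ne_zero b
  have n3 := qintF_ne_zero (a+1) (by omega)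
  have n4 := qintF_ne_zero (b+1) (by omega)
  field_simp
  ring

lemma pascal2 (a b : ℕ) :
    qfactF (a+b+2) / (qfactF (b+1) * qfactF (a+1))
      = qfactF (a+b+1) / (qfactF b * qfactF (a+1))
        + (RatFunc.X : RatFunc ℂ)^(b+1) * (qfactF (a+b+1) / (qfactF (b+1) * qfactF a)) := by
  have k1 : qfactF (a+b+2) = qfactF (a+b+1) * qintF (a+b+2) := qfact_succ (a+b+1)
  have k4 : qintF (a+b+2) = qintF (b+1) + (RatFunc.X : RatFunc ℂ)^(b+1) * qintF (a+1) := by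
    rw [show a+b+2 = (b+1)+(a+1) by ring]; exact qintF_add _ _
  have k2 : qfactF (b+1) = qfactF b * qintF (b+1) := qfact_succ b
  have k3 : qfactF (a+1) = qfactF a * qintF (a+1) := qfact_succ a
  rw [k1, k4, k2, k3]
  have n1 := qfactF_ne_zero a
  have n2 := qfactF_ne_zero b
  have n3 := qintF_ne_zero (a+1) (by omega)
  have n4 := qintF_ne_zero (b+1) (by omega)
  field_simp

lemma coreB (c z : ℕ) :
    ((RatFunc.X : RatFunc ℂ)^(c+1) - 1) * (qfactF (z+c+1) / (qfactF z * qfactF (c+1)))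
      = ((RatFunc.X : RatFunc ℂ)^(z+1) - 1) * (qfactF (z+c+1) / (qfactF (z+1) * qfactF c)) := by
  rw [← qintF_geom (c+1), ← qintF_geom (z+1), qfact_succ c, qfact_succ z]
  have n1 := qfactF_ne_zero c
  have n2 := qfactF_ne_zero z
  have n3 := qintF_ne_zero (c+1) (by omega)
  have n4 := qintF_ne_zero (z+1) (by omega)
  field_simp

lemma lemA (x y : ℕ) :
    ((RatFunc.X : RatFunc ℂ)^(-((x:ℤ)+1)) - (RatFunc.X : RatFunc ℂ)^(-(y:ℤ))) *
        qbinomZ ((x:ℤ)+(y:ℤ)) (y:ℤ)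
      = ((RatFunc.X : RatFunc ℂ)^(-((x:ℤ)+1)) - 1) * qbinomZ ((x:ℤ)+(y:ℤ)-1) (y:ℤ)
        + ((RatFunc.X : RatFunc ℂ)^(-1:ℤ) - (RatFunc.X : RatFunc ℂ)^(-(y:ℤ))) *
            qbinomZ ((x:ℤ)+(y:ℤ)-1) ((y:ℤ)-1) := by
  rcases Nat.eq_zero_or_pos y with hy | hy
  · subst hy
    simp only [Nat.cast_zero, neg_zero, zpow_zero, add_zero]
    rw [qbinomZ_zero, qbinomZ_zero, qbinomZ_of_neg (by omega : (0:ℤ)-1 < 0)]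
    ring
  rcases Nat.eq_zero_or_pos x with hx | hx
  · subst hx
    obtain ⟨b, rfl⟩ : ∃ b, y = b + 1 := ⟨y - 1, by omega⟩
    simp only [Nat.cast_zero, zero_add]
    rw [show ((b+1:ℕ):ℤ) - 1 = ((b:ℕ):ℤ) by push_cast; ring]
    rw [qbinomZ_self (b+1), qbinomZ_self b]
    rw [qbinomZ_of_gt (by apply max_lt <;> push_cast <;> omega : max 0 ((b:ℕ):ℤ) < ((b+1:ℕ):ℤ))]
    ring
  obtain ⟨a, rfl⟩ : ∃ a, x = a + 1 := ⟨x - 1, by omega⟩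
  obtain ⟨b, rfl⟩ : ∃ b, y = b + 1 := ⟨y - 1, by omega⟩
  rw [show ((a+1:ℕ):ℤ) + ((b+1:ℕ):ℤ) = ((a+b+2:ℕ):ℤ) by push_cast; ring]
  rw [show ((a+b+2:ℕ):ℤ) - 1 = ((a+b+1:ℕ):ℤ) by push_cast; ring]
  rw [show ((b+1:ℕ):ℤ) - 1 = ((b:ℕ):ℤ) by push_cast; ring]
  rw [qbinomZ_cast (a+b+2) (b+1) (a+1) (by ring), qbinomZ_cast (a+b+1) (b+1) a (by ring),
    qbinomZ_cast (a+b+1) b (a+1) (by ring)]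
  have e1 := pascal1 a b
  have e2 := pascal2 a b
  have hx1 : (RatFunc.X : RatFunc ℂ)^(-(((a+1:ℕ):ℤ))-1) * (RatFunc.X : RatFunc ℂ)^(a+1)
      = (RatFunc.X : RatFunc ℂ)^(-1:ℤ) := by
    rw [← zpow_natCast (RatFunc.X : RatFunc ℂ) (a+1), ← zpow_add₀ Xr_ne_zero]
    congr 1; push_cast; ring
  have hx : (RatFunc.X : RatFunc ℂ)^(-(((a+1:ℕ):ℤ)+1)) * (RatFunc.X : RatFunc ℂ)^(a+1)
      = (RatFunc.X : RatFunc ℂ)^(-1:ℤ) := by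
    rw [show -(((a+1:ℕ):ℤ)+1) = -(((a+1:ℕ):ℤ))-1 by ring]; exact hx1
  have hy1 : (RatFunc.X : RatFunc ℂ)^(-((b+1:ℕ):ℤ)) * (RatFunc.X : RatFunc ℂ)^(b+1) = 1 := by
    rw [← zpow_natCast (RatFunc.X : RatFunc ℂ) (b+1), ← zpow_add₀ Xr_ne_zero,
      show -(((b+1:ℕ)):ℤ) + (((b+1:ℕ)):ℤ) = 0 by ring, zpow_zero]
  linear_combination ((RatFunc.X : RatFunc ℂ)^(-(((a+1:ℕ):ℤ)+1))) * e1
    - ((RatFunc.X : RatFunc ℂ)^(-((b+1:ℕ):ℤ))) * e2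
    + (qfactF (a+b+1) / (qfactF b * qfactF (a+1))) * hx
    - (qfactF (a+b+1) / (qfactF (b+1) * qfactF a)) * hy1

lemma lemB (y z : ℕ) (hy : 1 ≤ y) :
    ((RatFunc.X:RatFunc ℂ)^(-1:ℤ) - (RatFunc.X:RatFunc ℂ)^(-(y:ℤ))) *
        qbinomZ ((y:ℤ)+(z:ℤ)-1) (z:ℤ)
      + (RatFunc.X:RatFunc ℂ)^(1-(y:ℤ)+(z:ℤ)) *
        (((RatFunc.X:RatFunc ℂ)^(-((z:ℤ)+1)) - 1) * qbinomZ ((y:ℤ)+(z:ℤ)-1) ((z:ℤ)+1)) = 0 := by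
  rcases Nat.lt_or_ge y 2 with hy2 | hy2
  · obtain rfl : y = 1 := by omega
    rw [show ((1:ℕ):ℤ) + (z:ℤ) - 1 = (z:ℤ) by push_cast; ring]
    rw [qbinomZ_of_gt (by apply max_lt <;> omega : max 0 ((z:ℤ)) < (z:ℤ)+1)]
    simp only [Nat.cast_one]
    ring
  obtain ⟨d, rfl⟩ : ∃ d, y = d + 2 := ⟨y - 2, by omega⟩
  rw [show ((d+2:ℕ):ℤ) + (z:ℤ) - 1 = ((z+d+1:ℕ):ℤ) by push_cast; ring]
  rw [show ((z:ℕ):ℤ) + 1 = ((z+1:ℕ):ℤ) by push_cast; ring]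
  rw [qbinomZ_cast (z+d+1) z (d+1) (by ring), qbinomZ_cast (z+d+1) (z+1) d (by ring)]
  have h0 := coreB d z
  have h1 : (RatFunc.X:RatFunc ℂ)^(-((d+2:ℕ):ℤ)) * (RatFunc.X:RatFunc ℂ)^(d+1)
      = (RatFunc.X:RatFunc ℂ)^(-1:ℤ) := by
    rw [← zpow_natCast (RatFunc.X : RatFunc ℂ) (d+1), ← zpow_add₀ Xr_ne_zero]
    congr 1; push_cast; ring
  have h2 : (RatFunc.X:RatFunc ℂ)^(1-((d+2:ℕ):ℤ)+(z:ℤ)) * (RatFunc.X:RatFunc ℂ)^(-((z+1:ℕ):ℤ))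
      = (RatFunc.X:RatFunc ℂ)^(-((d+2:ℕ):ℤ)) := by
    rw [← zpow_add₀ Xr_ne_zero]
    congr 1; push_cast; ring
  have h3 : (RatFunc.X:RatFunc ℂ)^(-((d+2:ℕ):ℤ)) * (RatFunc.X:RatFunc ℂ)^(z+1)
      = (RatFunc.X:RatFunc ℂ)^(1-((d+2:ℕ):ℤ)+(z:ℤ)) := by
    rw [← zpow_natCast (RatFunc.X : RatFunc ℂ) (z+1), ← zpow_add₀ Xr_ne_zero]
    congr 1; push_cast; ring
  linear_combination ((RatFunc.X:RatFunc ℂ)^(-((d+2:ℕ):ℤ))) * h0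
    - (qfactF (z+d+1) / (qfactF z * qfactF (d+1))) * h1
    + (qfactF (z+d+1) / (qfactF (z+1) * qfactF d)) * h2
    + (qfactF (z+d+1) / (qfactF (z+1) * qfactF d)) * h3

section Tele

variable (N : ℕ) (a : Fin (2 * N) → ℕ)

lemma bExt_nonneg (j : ℕ) : 0 ≤ bExt N a j := by
  unfold bExt; split
  · positivity
  · exact le_refl 0

lemma bExt_zero : bExt N a 0 = 0 := by unfold bExt; rw [dif_neg (by omega)]

lemma bExt_gt {j : ℕ} (h : 2*N < j) : bExt N a j = 0 := by
  unfold bExt; rw [dif_neg (by omega)]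

lemma cMod_ge {r j : ℕ} (h : 2*r-1 ≤ j) : cMod N a r j = bExt N a j := by
  unfold cMod; rw [if_neg (by omega), if_neg (by omega)]

lemma cMod_top {r : ℕ} (hr : 1 ≤ r) : cMod N a r (2*r-2) = bExt N a (2*r-2) + 1 := by
  unfold cMod; rw [if_neg (by omega), if_pos (by omega)]

lemma cMod_succ_odd {r : ℕ} (hr : 1 ≤ r) : cMod N a (r+1) (2*r-1) = bExt N a (2*r-1) - 1 := by
  unfold cMod; rw [if_pos (by omega)]

lemma cMod_succ_even (r : ℕ) : cMod N a (r+1) (2*r) = bExt N a (2*r) + 1 := by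
  unfold cMod; rw [if_neg (by omega), if_pos (by omega)]

lemma cMod_agree {r j : ℕ} (hr : 1 ≤ r) (h1 : j ≠ 2*r-1) (h2 : j ≠ 2*r) :
    cMod N a (r+1) j = cMod N a r j := by
  unfold cMod; split_ifs <;> first | rfl | omega

def phiFac (r j : ℕ) : RatFunc ℂ :=
  qbinomZ (cMod N a r j + cMod N a r (j+1) - 1) (cMod N a r (j+1))

def gFac (r j : ℕ) : RatFunc ℂ :=
  if j = 2*r-2 then qbinomZ (bExt N a (2*r-2) + bExt N a (2*r-1) - 1) (bExt N a (2*r-1))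
  else phiFac N a r j

def hFac (r j : ℕ) : RatFunc ℂ :=
  if j = 2*r-2 then qbinomZ (bExt N a (2*r-2) + bExt N a (2*r-1) - 1) (bExt N a (2*r-1) - 1)
  else phiFac N a r j

def GG (r : ℕ) : RatFunc ℂ :=
  (RatFunc.X : RatFunc ℂ)^(Yexp N a r) *
    ((RatFunc.X : RatFunc ℂ)^(-(bExt N a (2*r-2)+1)) - 1) *
    ∏ i ∈ range (2*N-1), gFac N a r (i+1)

def HH (r : ℕ) : RatFunc ℂ :=
  (RatFunc.X : RatFunc ℂ)^(Yexp N a r) *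
    ((RatFunc.X : RatFunc ℂ)^(-1:ℤ) - (RatFunc.X : RatFunc ℂ)^(-(bExt N a (2*r-1)))) *
    ∏ i ∈ range (2*N-1), hFac N a r (i+1)

lemma Phi_eq (r : ℕ) : Phi N a r =
    (RatFunc.X : RatFunc ℂ)^(Yexp N a r) *
      ((RatFunc.X : RatFunc ℂ)^(-(bExt N a (2*r-2)+1)) -
        (RatFunc.X : RatFunc ℂ)^(-(bExt N a (2*r-1)))) *
      ∏ i ∈ range (2*N-1), phiFac N a r (i+1) := rfl

lemma Yexp_succ {r : ℕ} (hr : 1 ≤ r) :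
    Yexp N a (r+1) = Yexp N a r + 1 - bExt N a (2*r-1) + bExt N a (2*r) := by
  have h1 := Finset.sum_Icc_succ_top (by omega : 1 ≤ (2*r-1)+1)
    (fun j => ((-1:ℤ))^j * bExt N a j)
  have h2 := Finset.sum_Icc_succ_top (by omega : 1 ≤ (2*r-2)+1)
    (fun j => ((-1:ℤ))^j * bExt N a j)
  rw [show (2*r-1)+1 = 2*r by omega] at h1
  rw [show (2*r-2)+1 = 2*r-1 by omega] at h2
  unfold Yexp
  rw [show 2*(r+1)-2 = 2*r by omega, h1, h2]
  have o1 : ((-1:ℤ))^(2*r-1) = -1 := Odd.neg_one_pow ⟨r-1, by omega⟩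
  have o2 : ((-1:ℤ))^(2*r) = 1 := Even.neg_one_pow ⟨r, by omega⟩
  simp only [o1, o2]
  push_cast
  ring

lemma Phi_one : Phi N a 1 = HH N a 1 := by
  rw [Phi_eq, HH]
  rw [show 2*1-2 = 0 by omega, bExt_zero]
  rw [show -((0:ℤ)+1) = (-1:ℤ) by ring]
  have : ∀ i ∈ range (2*N-1), hFac N a 1 (i+1) = phiFac N a 1 (i+1) :=
    fun i _ => if_neg (by omega)
  rw [Finset.prod_congr rfl this]

lemma Phi_last (hN : 1 ≤ N) : Phi N a (N+1) = GG N a (N+1) := by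
  rw [Phi_eq, GG]
  rw [bExt_gt N a (by omega : 2*N < 2*(N+1)-1)]
  rw [show -(0:ℤ) = (0:ℤ) by ring, zpow_zero]
  congr 1
  refine Finset.prod_congr rfl fun i hi => ?_
  rw [Finset.mem_range] at hi
  exact (if_neg (by omega)).symm

lemma Phi_split {r : ℕ} (h2 : 2 ≤ r) (hrN : r ≤ N) :
    Phi N a r = GG N a r + HH N a r := by
  have hmem : 2*r-3 ∈ range (2*N-1) := by rw [Finset.mem_range]; omega
  rw [Phi_eq, GG, HH]
  rw [← Finset.mul_prod_erase _ (fun i => phiFac N a r (i+1)) hmem,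
      ← Finset.mul_prod_erase _ (fun i => gFac N a r (i+1)) hmem,
      ← Finset.mul_prod_erase _ (fun i => hFac N a r (i+1)) hmem]
  have hgP : ∏ i ∈ (range (2*N-1)).erase (2*r-3), gFac N a r (i+1)
      = ∏ i ∈ (range (2*N-1)).erase (2*r-3), phiFac N a r (i+1) :=
    Finset.prod_congr rfl fun i hi =>
      if_neg (by have := (Finset.mem_erase.mp hi).1; omega)
  have hhP : ∏ i ∈ (range (2*N-1)).erase (2*r-3), hFac N a r (i+1)
      = ∏ i ∈ (range (2*N-1)).erase (2*r-3), phiFac N a r (i+1) :=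
    Finset.prod_congr rfl fun i hi =>
      if_neg (by have := (Finset.mem_erase.mp hi).1; omega)
  rw [hgP, hhP]
  have ePhi : phiFac N a r ((2*r-3)+1)
      = qbinomZ (bExt N a (2*r-2) + bExt N a (2*r-1)) (bExt N a (2*r-1)) := by
    rw [show (2*r-3)+1 = 2*r-2 by omega]
    unfold phiFac
    rw [show (2*r-2)+1 = 2*r-1 by omega]
    rw [cMod_top N a (by omega), cMod_ge N a (le_refl (2*r-1))]
    congr 1
    ring
  have eG : gFac N a r ((2*r-3)+1)
      = qbinomZ (bExt N a (2*r-2) + bExt N a (2*r-1) - 1) (bExt N a (2*r-1)) := by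
    rw [show (2*r-3)+1 = 2*r-2 by omega]; exact if_pos rfl
  have eH : hFac N a r ((2*r-3)+1)
      = qbinomZ (bExt N a (2*r-2) + bExt N a (2*r-1) - 1) (bExt N a (2*r-1) - 1) := by
    rw [show (2*r-3)+1 = 2*r-2 by omega]; exact if_pos rfl
  rw [ePhi, eG, eH]
  obtain ⟨x, hx⟩ := Int.eq_ofNat_of_zero_le (bExt_nonneg N a (2*r-2))
  obtain ⟨y, hy⟩ := Int.eq_ofNat_of_zero_le (bExt_nonneg N a (2*r-1))
  rw [hx, hy]
  linear_combination ((RatFunc.X:RatFunc ℂ)^(Yexp N a r) *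
    ∏ i ∈ (range (2*N-1)).erase (2*r-3), phiFac N a r (i+1)) * lemA x y

lemma GG_succ_zero {r : ℕ} (h1 : 1 ≤ r) (hrN : r ≤ N) (hy0 : bExt N a (2*r-1) = 0) :
    GG N a (r+1) = 0 := by
  rw [GG]
  have hmem : 2*r-2 ∈ range (2*N-1) := by rw [Finset.mem_range]; omega
  rw [Finset.prod_eq_zero hmem]
  · ring
  · rw [show (2*r-2)+1 = 2*r-1 by omega, gFac, if_neg (by omega)]
    unfold phiFac
    rw [show (2*r-1)+1 = 2*r by omega, cMod_succ_odd N a h1, cMod_succ_even N a r, hy0]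
    apply qbinomZ_of_gt
    have hz := bExt_nonneg N a (2*r)
    apply max_lt <;> omega

lemma HH_zero_hi {r : ℕ} (h2 : 2 ≤ r) (hrN : r ≤ N) (hy0 : bExt N a (2*r-1) = 0) :
    HH N a r = 0 := by
  rw [HH]
  have hmem : 2*r-3 ∈ range (2*N-1) := by rw [Finset.mem_range]; omega
  rw [Finset.prod_eq_zero hmem]
  · ring
  · rw [show (2*r-3)+1 = 2*r-2 by omega, hFac, if_pos rfl, hy0]
    exact qbinomZ_of_neg (by omega)

lemma HH_one_zero (ha : a ≠ 0) (hN : 1 ≤ N) (hy0 : bExt N a 1 = 0) :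
    HH N a 1 = 0 := by
  have hex : ∃ j, bExt N a j ≠ 0 := by
    by_contra hcon
    push_neg at hcon
    apply ha
    funext i
    have hb : bExt N a (i.val+1) = (a i : ℤ) := by
      unfold bExt
      rw [dif_pos ⟨by omega, by have := i.isLt; omega⟩]
      congr 1
    have := hcon (i.val + 1)
    rw [hb] at this
    simpa using this
  set k := Nat.find hex with hkdef
  have hk : bExt N a k ≠ 0 := Nat.find_spec hex
  have hmin : ∀ m, m < k → bExt N a m = 0 := fun m hm =>
    not_not.mp (Nat.find_min hex hm)
  have hk2N : k ≤ 2*N := by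
    by_contra hcon
    exact hk (bExt_gt N a (by omega))
  have hk2 : 2 ≤ k := by
    by_contra hcon
    interval_cases k
    · exact hk (bExt_zero N a)
    · exact hk hy0
  rw [HH]
  have hmem : k-2 ∈ range (2*N-1) := by rw [Finset.mem_range]; omega
  rw [Finset.prod_eq_zero hmem]
  · ring
  · rw [show (k-2)+1 = k-1 by omega, hFac, if_neg (by omega)]
    unfold phiFac
    rw [show (k-1)+1 = k by omega]
    rw [cMod_ge N a (by omega : 2*1-1 ≤ k-1), cMod_ge N a (by omega : 2*1-1 ≤ k)]
    rw [hmin (k-1) (by omega)]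
    apply qbinomZ_of_gt
    have h0 := bExt_nonneg N a k
    apply max_lt <;> omega

lemma tele (ha : a ≠ 0) {r : ℕ} (h1 : 1 ≤ r) (hrN : r ≤ N) :
    HH N a r + GG N a (r+1) = 0 := by
  obtain ⟨y, hy⟩ := Int.eq_ofNat_of_zero_le (bExt_nonneg N a (2*r-1))
  rcases Nat.eq_zero_or_pos y with hy0 | hy1
  · subst hy0
    have hy' : bExt N a (2*r-1) = 0 := by rw [hy]; rfl
    rw [GG_succ_zero N a h1 hrN hy', add_zero]
    rcases Nat.lt_or_ge r 2 with hr1 | hr2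
    · obtain rfl : r = 1 := by omega
      exact HH_one_zero N a ha (by omega) hy'
    · exact HH_zero_hi N a hr2 hrN hy'
  -- main case
  have hmem : 2*r-2 ∈ range (2*N-1) := by rw [Finset.mem_range]; omega
  have hagree : ∀ i ∈ (range (2*N-1)).erase (2*r-2),
      hFac N a r (i+1) = gFac N a (r+1) (i+1) := by
    intro i hi
    obtain ⟨hne, hir⟩ := Finset.mem_erase.mp hi
    rw [Finset.mem_range] at hir
    by_cases hcase : i+1 = 2*r-2
    · have hr2 : 2 ≤ r := by omega
      rw [hFac, if_pos hcase, gFac, if_neg (by omega)]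
      unfold phiFac
      rw [hcase, show (2*r-2)+1 = 2*r-1 by omega]
      rw [cMod_agree N a h1 (by omega) (by omega)]
      rw [cMod_top N a (by omega)]
      rw [cMod_succ_odd N a h1]
      congr 1
      ring
    · by_cases hcase2 : i+1 = 2*r
      · rw [hFac, if_neg (by omega), gFac, if_pos (by omega : i+1 = 2*(r+1)-2)]
        unfold phiFac
        rw [hcase2]
        rw [cMod_ge N a (by omega : 2*r-1 ≤ 2*r), cMod_ge N a (by omega : 2*r-1 ≤ 2*r+1)]
        rw [show 2*(r+1)-2 = 2*r by omega, show 2*(r+1)-1 = 2*r+1 by omega]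
      · rw [hFac, if_neg hcase, gFac, if_neg (by omega)]
        unfold phiFac
        rw [cMod_agree N a h1 (by omega) (by omega),
            cMod_agree N a h1 (by omega) (by omega)]
  obtain ⟨z, hz⟩ := Int.eq_ofNat_of_zero_le (bExt_nonneg N a (2*r))
  rw [HH, GG]
  rw [← Finset.mul_prod_erase _ (fun i => hFac N a r (i+1)) hmem,
      ← Finset.mul_prod_erase _ (fun i => gFac N a (r+1) (i+1)) hmem]
  rw [Finset.prod_congr rfl hagree]
  have eH : hFac N a r ((2*r-2)+1) = qbinomZ ((y:ℤ) + (z:ℤ) - 1) (z:ℤ) := by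
    rw [show (2*r-2)+1 = 2*r-1 by omega, hFac, if_neg (by omega)]
    unfold phiFac
    rw [show (2*r-1)+1 = 2*r by omega,
      cMod_ge N a (le_refl (2*r-1)), cMod_ge N a (by omega : 2*r-1 ≤ 2*r), hy, hz]
  have eG : gFac N a (r+1) ((2*r-2)+1) = qbinomZ ((y:ℤ)+(z:ℤ)-1) ((z:ℤ)+1) := by
    rw [show (2*r-2)+1 = 2*r-1 by omega, gFac, if_neg (by omega)]
    unfold phiFac
    rw [show (2*r-1)+1 = 2*r by omega, cMod_succ_odd N a h1, cMod_succ_even N a r, hy, hz]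
    congr 1 <;> ring
  rw [eH, eG]
  rw [show 2*(r+1)-2 = 2*r by omega]
  rw [Yexp_succ N a h1, hy, hz]
  rw [show Yexp N a r + 1 - ((y:ℕ):ℤ) + ((z:ℕ):ℤ)
      = Yexp N a r + (1 - ((y:ℕ):ℤ) + ((z:ℕ):ℤ)) by ring]
  rw [zpow_add₀ Xr_ne_zero]
  linear_combination ((RatFunc.X:RatFunc ℂ)^(Yexp N a r) *
    ∏ i ∈ (range (2*N-1)).erase (2*r-2), gFac N a (r+1) (i+1)) * lemB y z hy1

end Tele

end TelescopeAux

/-- For every `N ≥ 1` and every `(a_1, …, a_{2N}) ∈ ℕ^{2N} \ {0}`,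
`∑_{r=1}^{N+1} Φ_{N,r}(a_1,…,a_{2N}) = 0`. -/
theorem sum_Phi_eq_zero (N : ℕ) (hN : 1 ≤ N) (a : Fin (2 * N) → ℕ) (ha : a ≠ 0) :
    ∑ r ∈ Finset.Icc 1 (N + 1), Phi N a r = 0 := by
  have hins : Finset.Icc 1 N = insert 1 (Finset.Icc 2 N) := by
    ext m; simp only [Finset.mem_Icc, Finset.mem_insert]; omega
  have h1 : ∑ r ∈ Finset.Icc 1 (N+1), Phi N a r
      = ∑ r ∈ Finset.Icc 1 N, Phi N a r + Phi N a (N+1) :=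
    Finset.sum_Icc_succ_top (by omega) _
  rw [h1, hins, Finset.sum_insert (by simp)]
  rw [Phi_one N a, Phi_last N a hN]
  have hsplit : ∑ r ∈ Finset.Icc 2 N, Phi N a r
      = ∑ r ∈ Finset.Icc 2 N, (GG N a r + HH N a r) :=
    Finset.sum_congr rfl (fun r hr => by
      rw [Finset.mem_Icc] at hr
      exact Phi_split N a hr.1 hr.2)
  rw [hsplit, Finset.sum_add_distrib]
  have hG : ∑ r ∈ Finset.Icc 2 N, GG N a r + GG N a (N+1)
      = ∑ r ∈ Finset.Icc 2 (N+1), GG N a r :=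
    (Finset.sum_Icc_succ_top (by omega) _).symm
  have hH : HH N a 1 + ∑ r ∈ Finset.Icc 2 N, HH N a r = ∑ r ∈ Finset.Icc 1 N, HH N a r := by
    rw [hins, Finset.sum_insert (by simp)]
  have hfin : ∑ r ∈ Finset.Icc 1 N, HH N a r + ∑ r ∈ Finset.Icc 2 (N+1), GG N a r = 0 := by
    rw [show Finset.Icc 1 N = Finset.Ico 1 (N+1) from (Finset.Ico_add_one_right_eq_Icc 1 N).symm]
    rw [show Finset.Icc 2 (N+1) = Finset.Ico 2 (N+2) from (Finset.Ico_add_one_right_eq_Icc 2 (N+1)).symm]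
    rw [Finset.sum_Ico_eq_sum_range, Finset.sum_Ico_eq_sum_range]
    rw [show N+1-1 = N by omega, show N+2-2 = N by omega]
    rw [← Finset.sum_add_distrib]
    apply Finset.sum_eq_zero
    intro i hi
    rw [Finset.mem_range] at hi
    have ht := tele N a ha (show 1 ≤ 1+i by omega) (show 1+i ≤ N by omega)
    rw [show 2+i = (1+i)+1 by omega]
    exact ht
  linear_combination hG + hH + hfin
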